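/- Let 1 < p < ∞ and ε > 0. There exists a constant C = C(p, ε) > 0 such that for every 0 < λ ≤ 1 and every C² function u : ℝ → ℝ periodic with period 1/λ, ∫₀^{1/λ} |u'(z)|^p dz ≤ C λ ∫₀^{1/λ} |u(z)|^p dz + (ε/λ) ∫₀^{1/λ} |u''(z)|^p dz. -/

import Mathlib

open MeasureTheory Set intervalIntegral

/-!
On an interval `[a, b]` of length `L`, test `u'` against the weight `(t - a) (b - t)`: integrating
by parts moves the derivative onto the weight, and since `u'` oscillates on `[a, b]` by at most
`∫ |u''|`, this gives `|u'(x)| ≤ (6 / L) ⨍ |u| + L ⨍ |u''|` for every `x ∈ [a, b]`. Jensen's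
inequality turns this into `∫ |u'|^p ≤ 2^(p-1) ((6 / L)^p ∫ |u|^p + L^p ∫ |u''|^p)` on `[a, b]`.
Cutting `[0, 1/λ]` into `N` intervals of length `L`, with `L^p` comparable to `ε / λ` (possible
because `λ ≤ 1`), and summing gives the theorem.
-/

lemma Real.rpow_add_le_mul_rpow_add_rpow {p : ℝ} (hp : 1 ≤ p) {s t : ℝ} (hs : 0 ≤ s)
    (ht : 0 ≤ t) : (s + t) ^ p ≤ 2 ^ (p - 1) * (s ^ p + t ^ p) := by
  lift s to NNReal using hs
  lift t to NNReal using ht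
  exact_mod_cast NNReal.rpow_add_le_mul_rpow_add_rpow s t hp

lemma rpow_interval_average_abs_le {p : ℝ} (hp : 1 ≤ p) {f : ℝ → ℝ} {a b : ℝ} (hab : a ≠ b)
    (hf : IntervalIntegrable f volume a b)
    (hfp : IntervalIntegrable (fun x ↦ |f x| ^ p) volume a b) :
    (⨍ x in a..b, |f x|) ^ p ≤ ⨍ x in a..b, |f x| ^ p :=
  (convexOn_rpow hp).map_set_average_le (continuousOn_id.rpow_const fun _ _ ↦ Or.inr (by linarith))
    isClosed_Ici (by simp [sub_eq_zero, hab.symm]) (by simp)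
    (Filter.Eventually.of_forall fun x ↦ abs_nonneg (f x)) hf.def'.abs hfp.def'

lemma abs_sub_le_integral_abs_deriv {f : ℝ → ℝ} (hf : ContDiff ℝ 1 f) {a b x y : ℝ}
    (hx : x ∈ Icc a b) (hy : y ∈ Icc a b) : |f y - f x| ≤ ∫ t in a..b, |deriv f t| := by
  have hf' := hf.continuous_deriv le_rfl
  rw [← integral_deriv_eq_sub (fun t _ ↦ hf.differentiable one_ne_zero t)
    (hf'.intervalIntegrable x y)]
  wlog hxy : x ≤ y generalizing x y
  · rw [integral_symm, abs_neg]
    exact this hy hx (le_of_not_ge hxy)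
  calc |∫ t in x..y, deriv f t| ≤ ∫ t in x..y, |deriv f t| := abs_integral_le_integral_abs hxy
    _ ≤ ∫ t in a..b, |deriv f t| := integral_mono_interval hx.1 hxy hy.2
        (.of_forall fun _ ↦ abs_nonneg _) (hf'.abs.intervalIntegrable a b)

lemma abs_mul_integral_le_of_abs_sub_le {f w : ℝ → ℝ} {a b x M : ℝ} (hab : a ≤ b)
    (hf : Continuous f) (hw : Continuous w) (hw0 : ∀ t ∈ Icc a b, 0 ≤ w t)
    (hM : ∀ t ∈ Icc a b, |f t - f x| ≤ M) :
    |f x| * ∫ t in a..b, w t ≤ |∫ t in a..b, w t * f t| + M * ∫ t in a..b, w t := by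
  have hW : 0 ≤ ∫ t in a..b, w t := integral_nonneg hab hw0
  have hsplit : f x * ∫ t in a..b, w t
      = (∫ t in a..b, w t * f t) - ∫ t in a..b, w t * (f t - f x) := by
    have hwf : IntervalIntegrable (fun t ↦ w t * f t) volume a b :=
      (hw.mul hf).intervalIntegrable a b
    have hwc : IntervalIntegrable (fun t ↦ w t * f x) volume a b :=
      (hw.mul continuous_const).intervalIntegrable a b
    simp only [mul_sub, integral_sub hwf hwc, intervalIntegral.integral_mul_const]
    ring
  have hosc : |∫ t in a..b, w t * (f t - f x)| ≤ M * ∫ t in a..b, w t := by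
    rw [← intervalIntegral.integral_const_mul]
    refine (abs_integral_le_integral_abs hab).trans (integral_mono_on hab
      ((hw.mul (hf.sub continuous_const)).abs.intervalIntegrable a b)
      ((continuous_const.mul hw).intervalIntegrable a b) fun t ht ↦ ?_)
    rw [abs_mul, abs_of_nonneg (hw0 t ht), mul_comm M]
    exact mul_le_mul_of_nonneg_left (hM t ht) (hw0 t ht)
  calc |f x| * ∫ t in a..b, w t = |f x * ∫ t in a..b, w t| := by rw [abs_mul, abs_of_nonneg hW]
    _ ≤ _ := by rw [hsplit]; exact (abs_sub _ _).trans (add_le_add_right hosc _)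

lemma integral_sub_mul_sub (a b : ℝ) :
    ∫ t in a..b, (t - a) * (b - t) = (b - a) ^ 3 / 6 := by
  have hF : ∀ t, HasDerivAt (fun t ↦ (b - a) * (t - a) ^ 2 / 2 - (t - a) ^ 3 / 3)
      ((t - a) * (b - t)) t := by
    intro t
    refine ((((hasDerivAt_id' t).sub_const a).pow 2 |>.const_mul (b - a) |>.div_const 2).sub
      ((((hasDerivAt_id' t).sub_const a).pow 3).div_const 3)).congr_deriv ?_
    push_cast; ring
  rw [integral_eq_sub_of_hasDerivAt (fun t _ ↦ hF t)
    (Continuous.intervalIntegrable (by fun_prop) _ _)]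
  ring

lemma integral_sub_mul_sub_mul_deriv {u : ℝ → ℝ} (hu : ContDiff ℝ 1 u) (a b : ℝ) :
    ∫ t in a..b, (t - a) * (b - t) * deriv u t = ∫ t in a..b, (2 * t - a - b) * u t := by
  have hw : ∀ t, HasDerivAt (fun t ↦ (t - a) * (b - t)) (a + b - 2 * t) t := by
    intro t
    exact (((hasDerivAt_id' t).sub_const a).mul ((hasDerivAt_id' t).const_sub b)).congr_deriv
      (by ring)
  rw [integral_mul_deriv_eq_deriv_mul (fun t _ ↦ hw t)
    (fun t _ ↦ (hu.differentiable one_ne_zero t).hasDerivAt)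
    (Continuous.intervalIntegrable (by fun_prop) _ _)
    ((hu.continuous_deriv le_rfl).intervalIntegrable a b)]
  simp only [sub_self, zero_mul, mul_zero, zero_sub, ← intervalIntegral.integral_neg]
  congr 1; ext t; ring

lemma abs_deriv_le_of_mem_Icc {u : ℝ → ℝ} (hu : ContDiff ℝ 2 u) {a b x : ℝ} (hab : a < b)
    (hx : x ∈ Icc a b) :
    |deriv u x|
      ≤ 6 / (b - a) * (⨍ t in a..b, |u t|) + (b - a) * ⨍ t in a..b, |deriv (deriv u) t| := by
  have hu' : ContDiff ℝ 1 (deriv u) := hu.deriv'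
  have hL : 0 < b - a := sub_pos.2 hab
  have hweighted := abs_mul_integral_le_of_abs_sub_le (w := fun t ↦ (t - a) * (b - t)) hab.le
    hu'.continuous (by fun_prop) (fun t ht ↦ mul_nonneg (sub_nonneg.2 ht.1) (sub_nonneg.2 ht.2))
    (fun t ht ↦ abs_sub_le_integral_abs_deriv hu' hx ht)
  rw [integral_sub_mul_sub, integral_sub_mul_sub_mul_deriv (hu.of_le one_le_two)] at hweighted
  have hmoment : |∫ t in a..b, (2 * t - a - b) * u t| ≤ (b - a) * ∫ t in a..b, |u t| := by
    rw [← intervalIntegral.integral_const_mul]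
    refine (abs_integral_le_integral_abs hab.le).trans (integral_mono_on hab.le
      (Continuous.intervalIntegrable (by fun_prop) _ _)
      (Continuous.intervalIntegrable (by fun_prop) _ _) fun t ht ↦ ?_)
    rw [abs_mul]
    exact mul_le_mul_of_nonneg_right (abs_le.2 ⟨by linarith [ht.1], by linarith [ht.2]⟩)
      (abs_nonneg _)
  rw [interval_average_eq, interval_average_eq, smul_eq_mul, smul_eq_mul,
    ← mul_le_mul_iff_of_pos_right (by positivity : (0 : ℝ) < (b - a) ^ 3 / 6)]
  calc |deriv u x| * ((b - a) ^ 3 / 6)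
      ≤ (b - a) * (∫ t in a..b, |u t|)
          + (∫ t in a..b, |deriv (deriv u) t|) * ((b - a) ^ 3 / 6) := by
        linarith
    _ = _ := by field_simp

lemma integral_abs_deriv_rpow_le {p : ℝ} (hp : 1 ≤ p) {u : ℝ → ℝ} (hu : ContDiff ℝ 2 u) {a b : ℝ}
    (hab : a < b) :
    ∫ t in a..b, |deriv u t| ^ p ≤ 2 ^ (p - 1) * (6 / (b - a)) ^ p * (∫ t in a..b, |u t| ^ p)
      + 2 ^ (p - 1) * (b - a) ^ p * ∫ t in a..b, |deriv (deriv u) t| ^ p := by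
  have hL : 0 < b - a := sub_pos.2 hab
  have hp0 : 0 ≤ p := by linarith
  have hu2 : Continuous (deriv (deriv u)) := hu.deriv'.continuous_deriv le_rfl
  have haverage_nonneg : ∀ g : ℝ → ℝ, (∀ t, 0 ≤ g t) → 0 ≤ ⨍ t in a..b, g t := fun g hg ↦ by
    rw [interval_average_eq]
    exact smul_nonneg (by positivity) (integral_nonneg hab.le fun t _ ↦ hg t)
  have hjensen : ∀ f : ℝ → ℝ, Continuous f → (⨍ t in a..b, |f t|) ^ p ≤ ⨍ t in a..b, |f t| ^ p :=
    fun f hf ↦ rpow_interval_average_abs_le hp hab.ne (hf.intervalIntegrable a b)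
      ((hf.abs.rpow_const fun _ ↦ Or.inr hp0).intervalIntegrable a b)
  set B := 2 ^ (p - 1) * ((6 / (b - a)) ^ p * (⨍ t in a..b, |u t| ^ p)
    + (b - a) ^ p * ⨍ t in a..b, |deriv (deriv u) t| ^ p) with hB
  have hpointwise : ∀ x ∈ Icc a b, |deriv u x| ^ p ≤ B := fun x hx ↦ by
    have h0 := haverage_nonneg (fun t ↦ |u t|) fun t ↦ abs_nonneg _
    have h2 := haverage_nonneg (fun t ↦ |deriv (deriv u) t|) fun t ↦ abs_nonneg _
    calc |deriv u x| ^ p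
        ≤ (6 / (b - a) * (⨍ t in a..b, |u t|) + (b - a) * ⨍ t in a..b, |deriv (deriv u) t|) ^ p :=
          Real.rpow_le_rpow (abs_nonneg _) (abs_deriv_le_of_mem_Icc hu hab hx) hp0
      _ ≤ 2 ^ (p - 1) * ((6 / (b - a) * ⨍ t in a..b, |u t|) ^ p
            + ((b - a) * ⨍ t in a..b, |deriv (deriv u) t|) ^ p) :=
          Real.rpow_add_le_mul_rpow_add_rpow hp (by positivity) (by positivity)
      _ = 2 ^ (p - 1) * ((6 / (b - a)) ^ p * (⨍ t in a..b, |u t|) ^ p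
            + (b - a) ^ p * (⨍ t in a..b, |deriv (deriv u) t|) ^ p) := by
          rw [Real.mul_rpow (by positivity) h0, Real.mul_rpow hL.le h2]
      _ ≤ B := by rw [hB]; gcongr; exacts [hjensen u hu.continuous, hjensen _ hu2]
  calc ∫ t in a..b, |deriv u t| ^ p ≤ ∫ _ in a..b, B :=
        integral_mono_on hab.le ((hu.continuous_deriv one_le_two).abs.rpow_const
          (fun _ ↦ Or.inr hp0) |>.intervalIntegrable a b) intervalIntegrable_const hpointwise
    _ = _ := by
        rw [hB, intervalIntegral.integral_const, smul_eq_mul, interval_average_eq,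
          interval_average_eq, smul_eq_mul, smul_eq_mul]
        field_simp

lemma integral_le_of_forall_integral_le {f g h : ℝ → ℝ} (hf : Continuous f) (hg : Continuous g)
    (hh : Continuous h) {A B L : ℝ}
    (hstep : ∀ x, ∫ t in x..x + L, f t ≤ A * (∫ t in x..x + L, g t) + B * ∫ t in x..x + L, h t)
    (a : ℝ) (N : ℕ) :
    ∫ t in a..a + N * L, f t ≤ A * (∫ t in a..a + N * L, g t) + B * ∫ t in a..a + N * L, h t := by
  induction N with
  | zero => simp
  | succ N ih =>
    have hsplit : ∀ φ : ℝ → ℝ, Continuous φ → ∫ t in a..a + (N + 1 : ℕ) * L, φ t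
        = (∫ t in a..a + N * L, φ t) + ∫ t in a + N * L..a + N * L + L, φ t := fun φ hφ ↦ by
      rw [integral_add_adjacent_intervals (hφ.intervalIntegrable _ _) (hφ.intervalIntegrable _ _),
        Nat.cast_succ, add_one_mul, add_assoc]
    rw [hsplit f hf, hsplit g hg, hsplit h hh]
    linarith [hstep (a + N * L)]

lemma exists_nat_div_mem_Icc {δ ℓ : ℝ} (hδ : 0 < δ) (hδℓ : δ ≤ ℓ) :
    ∃ N : ℕ, 0 < N ∧ ℓ / N ∈ Icc (δ / 2) δ := by
  have hℓ : 0 < ℓ := hδ.trans_le hδℓ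
  have hN : (0 : ℝ) < ⌈ℓ / δ⌉₊ := Nat.cast_pos.2 (Nat.ceil_pos.2 (by positivity))
  refine ⟨⌈ℓ / δ⌉₊, Nat.cast_pos.1 hN, ?_, ?_⟩
  · have hlt := Nat.ceil_lt_add_one (by positivity : 0 ≤ ℓ / δ)
    rw [le_div_iff₀ hN]
    have : δ * (ℓ / δ) = ℓ := mul_div_cancel₀ ℓ hδ.ne'
    nlinarith
  · rw [div_le_iff₀ hN, mul_comm, ← div_le_iff₀ hδ]
    exact Nat.le_ceil _

lemma integral_abs_deriv_rpow_le_of_nat_mul {p : ℝ} (hp : 1 ≤ p) {u : ℝ → ℝ}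
    (hu : ContDiff ℝ 2 u) {L : ℝ} (hL : 0 < L) (a : ℝ) (N : ℕ) :
    ∫ t in a..a + N * L, |deriv u t| ^ p
      ≤ 2 ^ (p - 1) * (6 / L) ^ p * (∫ t in a..a + N * L, |u t| ^ p)
        + 2 ^ (p - 1) * L ^ p * ∫ t in a..a + N * L, |deriv (deriv u) t| ^ p := by
  have hp0 : 0 ≤ p := by linarith
  have hu2 : Continuous (deriv (deriv u)) := hu.deriv'.continuous_deriv le_rfl
  exact integral_le_of_forall_integral_le
    ((hu.continuous_deriv one_le_two).abs.rpow_const fun _ ↦ Or.inr hp0)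
    (hu.continuous.abs.rpow_const fun _ ↦ Or.inr hp0) (hu2.abs.rpow_const fun _ ↦ Or.inr hp0)
    (fun x ↦ by simpa using integral_abs_deriv_rpow_le hp hu (lt_add_of_pos_right x hL)) a N

lemma exists_nat_mul_eq_one_div_of_rpow_le {p η lam : ℝ} (hp : 1 ≤ p) (hη : 0 < η) (hη1 : η ≤ 1)
    (hlam : 0 < lam) (hlam1 : lam ≤ 1) :
    ∃ N : ℕ, ∃ L > 0, N * L = 1 / lam ∧ (6 / L) ^ p ≤ 12 ^ p / η * lam ∧ L ^ p ≤ η / lam := by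
  have hp0 : 0 < p := by linarith
  set δ : ℝ := (η / lam) ^ p⁻¹
  have hδ : 0 < δ := by positivity
  have hδp : δ ^ p = η / lam := Real.rpow_inv_rpow (by positivity) hp0.ne'
  have hδle : δ ≤ 1 / lam := by
    rw [← Real.rpow_le_rpow_iff hδ.le (by positivity) hp0, hδp]
    calc η / lam ≤ 1 / lam := div_le_div_of_nonneg_right hη1 hlam.le
      _ ≤ (1 / lam) ^ p := Real.self_le_rpow_of_one_le (one_le_one_div hlam hlam1) hp
  obtain ⟨N, hN, hδL, hLδ⟩ := exists_nat_div_mem_Icc hδ hδle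
  set L := 1 / lam / N
  have hL : 0 < L := by positivity
  refine ⟨N, L, hL, by simp only [L]; field_simp, ?_, ?_⟩
  · calc (6 / L) ^ p ≤ (12 / δ) ^ p := by
          gcongr ?_ ^ p
          rw [div_le_div_iff₀ hL hδ]
          linarith
      _ = 12 ^ p / η * lam := by
          rw [Real.div_rpow (by norm_num) hδ.le, hδp]
          field_simp
  · rw [← hδp]
    gcongr

/-- **1D Sobolev interpolation inequality on a torus of period `1/λ`.**
For `1 < p < ∞` and `ε > 0` there is a constant `C = C(p, ε) > 0` such that for every
`0 < λ ≤ 1` and every `C²` function `u : ℝ → ℝ` of period `1/λ`,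
`∫₀^{1/λ} |u'|^p ≤ C λ ∫₀^{1/λ} |u|^p + (ε/λ) ∫₀^{1/λ} |u''|^p`. -/
theorem stmt6 (p ε : ℝ) (hp : 1 < p) (hε : 0 < ε) :
    ∃ C : ℝ, 0 < C ∧ ∀ lam : ℝ, 0 < lam → lam ≤ 1 →
      ∀ u : ℝ → ℝ, ContDiff ℝ 2 u → (∀ z : ℝ, u (z + 1 / lam) = u z) →
        (∫ z in (0:ℝ)..(1 / lam), |deriv u z| ^ p) ≤
          C * lam * (∫ z in (0:ℝ)..(1 / lam), |u z| ^ p) +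
            (ε / lam) * ∫ z in (0:ℝ)..(1 / lam), |deriv (deriv u) z| ^ p := by
  set K : ℝ := 2 ^ (p - 1)
  have hK : 0 < K := by positivity
  set η : ℝ := min (ε / K) 1
  have hη : 0 < η := lt_min (div_pos hε hK) one_pos
  refine ⟨K * 12 ^ p / η, by positivity, fun lam hlam hlam1 u hu _ ↦ ?_⟩
  obtain ⟨N, L, hL, hNL, hcoef₀, hcoef₂⟩ :=
    exists_nat_mul_eq_one_div_of_rpow_le hp.le hη (min_le_right _ _) hlam hlam1
  have hglobal := integral_abs_deriv_rpow_le_of_nat_mul hp.le hu hL 0 N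
  rw [zero_add, hNL] at hglobal
  refine hglobal.trans (add_le_add (mul_le_mul_of_nonneg_right ?_ ?_)
    (mul_le_mul_of_nonneg_right ?_ ?_))
  · calc K * (6 / L) ^ p ≤ K * (12 ^ p / η * lam) := by gcongr
      _ = K * 12 ^ p / η * lam := by ring
  · exact integral_nonneg (by positivity) fun _ _ ↦ by positivity
  · calc K * L ^ p ≤ K * (ε / K / lam) := by
          gcongr
          exact hcoef₂.trans (by gcongr; exact min_le_left _ _)
      _ = ε / lam := by field_simp
  · exact integral_nonneg (by positivity) fun _ _ ↦ by positivity
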